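/- Let Λ be an n×n diagonal matrix with positive diagonal entries λ₁, …, λₙ, and set Δᵢⱼ = λᵢ/λⱼ + λⱼ/λᵢ for i ≠ j. Then the Kantorovich function K(x) = (xᵀΛx)(xᵀΛ⁻¹x) is convex on ℝⁿ if and only if for every y ∈ ℝⁿ the n×n symmetric matrix H_n(Δ, y), whose (i,i) entry is 3yᵢ² + ½ Σ_{k≠i} Δᵢₖ yₖ² and whose (i,j) entry for i ≠ j is Δᵢⱼ yᵢ yⱼ, is positive semidefinite. -/

import Mathlib

open Matrix Set

/-!
Along a line, `K (x + t • y) = Q₁ (x + t • y) * Q₂ (x + t • y)` with `Q₁ x = xᵀΛx`,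
`Q₂ x = xᵀΛ⁻¹x` is a product of two quadratics in `t`, whose second derivative at `t` is
`2 h (x + t • y) y` with `h x y = Q₁ y Q₂ x + polar Q₁ x y * polar Q₂ x y + Q₁ x Q₂ y`.
A function is convex iff it is convex on every line, and a twice differentiable function of
one variable is convex iff its second derivative is nonnegative, so `K` is convex iff `h ≥ 0`.
Finally `xᵀ H_n(Δ, y) x = h x y / 2`: since `Δᵢᵢ = 2`, we have `3 yᵢ² = Δᵢᵢ yᵢ² + ½ Δᵢᵢ yᵢ²`, so
`H_n(Δ, y) = (Δᵢⱼ yᵢ yⱼ)ᵢⱼ + diag(½ Σₖ Δᵢₖ yₖ²)`, and both parts expand into products of sums.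
-/

theorem convexOn_univ_iff_forall_line {𝕜 E β : Type*} [CommRing 𝕜] [PartialOrder 𝕜]
    [IsOrderedRing 𝕜] [AddCommGroup E] [Module 𝕜 E] [AddCommMonoid β] [PartialOrder β]
    [SMul 𝕜 β] {f : E → β} :
    ConvexOn 𝕜 univ f ↔ ∀ x y : E, ConvexOn 𝕜 univ fun t : 𝕜 => f (x + t • y) := by
  refine ⟨fun hf x y => ⟨convex_univ, fun a _ b _ μ ν hμ hν hμν => ?_⟩,
    fun h => ⟨convex_univ, fun p _ q _ μ ν hμ hν hμν => ?_⟩⟩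
  · have hline : x + (μ • a + ν • b) • y = μ • (x + a • y) + ν • (x + b • y) := by
      obtain rfl : μ = 1 - ν := eq_sub_of_add_eq hμν
      module
    simpa only [hline] using hf.2 trivial trivial hμ hν hμν
  · have hline : μ • p + ν • q = p + ν • (q - p) := by
      obtain rfl : μ = 1 - ν := eq_sub_of_add_eq hμν
      module
    rw [hline]
    simpa using (h p (q - p)).2 (mem_univ (0 : 𝕜)) (mem_univ 1) hμ hν hμν

theorem convexOn_univ_iff_forall_nonneg_of_hasDerivAt₂ {f f' f'' : ℝ → ℝ}
    (hf : ∀ t, HasDerivAt f (f' t) t) (hf' : ∀ t, HasDerivAt f' (f'' t) t) :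
    ConvexOn ℝ univ f ↔ ∀ t, 0 ≤ f'' t := by
  have hderiv : deriv f = f' := funext fun t => (hf t).deriv
  refine ⟨fun hconv t => (hf' t).nonneg_of_monotone ?_, fun h => ?_⟩
  · rw [← hderiv, ← monotoneOn_univ]
    exact hconv.monotoneOn_deriv fun t _ => (hf t).differentiableAt
  · exact convexOn_of_hasDerivWithinAt2_nonneg convex_univ
      (HasDerivAt.continuousOn fun t _ => hf t) (fun t _ => (hf t).hasDerivWithinAt)
      (fun t _ => (hf' t).hasDerivWithinAt) fun t _ => h t

namespace QuadraticMap

variable {E : Type*} [AddCommGroup E] [Module ℝ E]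

theorem apply_add_smul (Q : QuadraticForm ℝ E) (x y : E) (t : ℝ) :
    Q (x + t • y) = Q x + t * polar Q x y + t ^ 2 * Q y := by
  rw [QuadraticMap.map_add (Q : E → ℝ), polar_smul_right, QuadraticMap.map_smul, smul_eq_mul,
    smul_eq_mul]
  ring

theorem polar_add_smul_left (Q : QuadraticForm ℝ E) (x y : E) (t : ℝ) :
    polar Q (x + t • y) y = polar Q x y + 2 * t * Q y := by
  rw [polar_add_left, polar_smul_left, polar_self, smul_eq_mul, nsmul_eq_mul]
  push_cast; ring

theorem hasDerivAt_apply_add_smul (Q : QuadraticForm ℝ E) (x y : E) (t : ℝ) :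
    HasDerivAt (fun s : ℝ => Q (x + s • y)) (polar Q (x + t • y) y) t := by
  simp only [apply_add_smul, polar_add_smul_left]
  exact ((((hasDerivAt_id' t).mul_const (polar Q x y)).const_add (Q x)).add
    ((hasDerivAt_pow 2 t).mul_const (Q y))).congr_deriv (by simp)

theorem hasDerivAt_polar_add_smul_left (Q : QuadraticForm ℝ E) (x y : E) (t : ℝ) :
    HasDerivAt (fun s : ℝ => polar Q (x + s • y) y) (2 * Q y) t := by
  simp only [polar_add_smul_left]
  simpa using (((hasDerivAt_id t).const_mul 2).mul_const (Q y)).const_add (polar Q x y)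

/-- Half the second derivative of `fun x ↦ Q₁ x * Q₂ x` at `x` in the direction `y`. -/
def mulHessian (Q₁ Q₂ : QuadraticForm ℝ E) (x y : E) : ℝ :=
  Q₁ y * Q₂ x + polar Q₁ x y * polar Q₂ x y + Q₁ x * Q₂ y

variable (Q₁ Q₂ : QuadraticForm ℝ E) (x y : E) (t : ℝ)

theorem hasDerivAt_mul_apply_add_smul :
    HasDerivAt (fun s : ℝ => Q₁ (x + s • y) * Q₂ (x + s • y))
      (polar Q₁ (x + t • y) y * Q₂ (x + t • y) + Q₁ (x + t • y) * polar Q₂ (x + t • y) y) t :=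
  (hasDerivAt_apply_add_smul Q₁ x y t).mul (hasDerivAt_apply_add_smul Q₂ x y t)

theorem hasDerivAt_polar_mul_add_mul_polar :
    HasDerivAt
      (fun s : ℝ =>
        polar Q₁ (x + s • y) y * Q₂ (x + s • y) + Q₁ (x + s • y) * polar Q₂ (x + s • y) y)
      (2 * mulHessian Q₁ Q₂ (x + t • y) y) t :=
  (((hasDerivAt_polar_add_smul_left Q₁ x y t).mul (hasDerivAt_apply_add_smul Q₂ x y t)).add
    ((hasDerivAt_apply_add_smul Q₁ x y t).mul
      (hasDerivAt_polar_add_smul_left Q₂ x y t))).congr_deriv (by rw [mulHessian]; ring)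

theorem convexOn_univ_mul_iff :
    ConvexOn ℝ univ (fun x => Q₁ x * Q₂ x) ↔ ∀ x y, 0 ≤ mulHessian Q₁ Q₂ x y := by
  rw [convexOn_univ_iff_forall_line]
  simp_rw [convexOn_univ_iff_forall_nonneg_of_hasDerivAt₂
    (hasDerivAt_mul_apply_add_smul Q₁ Q₂ _ _) (hasDerivAt_polar_mul_add_mul_polar Q₁ Q₂ _ _)]
  refine ⟨fun h x y => by simpa using h x y 0, fun h x y t => ?_⟩
  exact mul_nonneg zero_le_two (h _ _)

end QuadraticMap

namespace Matrix

variable {ι : Type*} [Fintype ι] [DecidableEq ι]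

theorem toQuadraticForm'_apply (M : Matrix ι ι ℝ) (x : ι → ℝ) :
    M.toQuadraticForm' x = x ⬝ᵥ (M *ᵥ x) :=
  toLinearMap₂'_apply' M x x

theorem polar_toQuadraticForm' (M : Matrix ι ι ℝ) (x y : ι → ℝ) :
    QuadraticMap.polar M.toQuadraticForm' x y = x ⬝ᵥ (M *ᵥ y) + y ⬝ᵥ (M *ᵥ x) := by
  rw [toQuadraticForm', LinearMap.BilinMap.polar_toQuadraticMap, toLinearMap₂'_apply',
    toLinearMap₂'_apply']

theorem dotProduct_diagonal_mulVec (w x y : ι → ℝ) :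
    x ⬝ᵥ (diagonal w *ᵥ y) = ∑ i, w i * (x i * y i) := by
  simp only [dotProduct, mulVec_diagonal]
  exact Finset.sum_congr rfl fun i _ => by ring

end Matrix

section Kantorovich

variable {ι : Type*} [Fintype ι]

theorem sum_sum_div_add_div_mul (lam u v : ι → ℝ) :
    ∑ i, ∑ j, (lam i / lam j + lam j / lam i) * (u i * v j) =
      (∑ i, lam i * u i) * ∑ j, lam⁻¹ j * v j + (∑ i, lam⁻¹ i * u i) * ∑ j, lam j * v j := by
  simp only [Finset.sum_mul_sum, ← Finset.sum_add_distrib, Pi.inv_apply]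
  exact Finset.sum_congr rfl fun i _ => Finset.sum_congr rfl fun j _ => by ring

variable [DecidableEq ι]

noncomputable def kantorovichMatrix (lam y : ι → ℝ) : Matrix ι ι ℝ :=
  of fun i j =>
    if i = j then
      3 * y i ^ 2 + (1 : ℝ) / 2 *
        ∑ k ∈ Finset.univ.erase i, (lam i / lam k + lam k / lam i) * y k ^ 2
    else (lam i / lam j + lam j / lam i) * y i * y j

variable {lam : ι → ℝ}

theorem kantorovichMatrix_eq_add_diagonal (hlam : ∀ i, lam i ≠ 0) (y : ι → ℝ) :
    kantorovichMatrix lam y =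
      (of fun i j => (lam i / lam j + lam j / lam i) * y i * y j) +
        diagonal fun i => 1 / 2 * ∑ k, (lam i / lam k + lam k / lam i) * y k ^ 2 := by
  ext i j
  rcases eq_or_ne i j with rfl | hij
  · simp only [kantorovichMatrix, of_apply, Matrix.add_apply, diagonal_apply_eq, if_true]
    rw [← Finset.add_sum_erase _ _ (Finset.mem_univ i), div_self (hlam i)]
    ring
  · simp [kantorovichMatrix, hij]

theorem isSymm_kantorovichMatrix (lam y : ι → ℝ) : (kantorovichMatrix lam y).IsSymm := by
  ext i j
  rcases eq_or_ne i j with rfl | hij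
  · rfl
  · simp [kantorovichMatrix, hij, hij.symm]
    ring

theorem dotProduct_kantorovichMatrix_mulVec (hlam : ∀ i, lam i ≠ 0) (x y : ι → ℝ) :
    x ⬝ᵥ (kantorovichMatrix lam y *ᵥ x) = 1 / 2 * QuadraticMap.mulHessian
      (diagonal lam).toQuadraticForm' (diagonal lam⁻¹).toQuadraticForm' x y := by
  have hsplit : x ⬝ᵥ (kantorovichMatrix lam y *ᵥ x) =
      ∑ i, ∑ j, (lam i / lam j + lam j / lam i) * ((x i * y i) * (x j * y j)) +
        1 / 2 * ∑ i, ∑ j, (lam i / lam j + lam j / lam i) * ((x i * x i) * (y j * y j)) := by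
    rw [kantorovichMatrix_eq_add_diagonal hlam, add_mulVec, dotProduct_add]
    simp only [dotProduct, mulVec_diagonal]
    simp only [dotProduct, mulVec, of_apply, Finset.mul_sum, Finset.sum_mul,
      ← Finset.sum_add_distrib]
    exact Finset.sum_congr rfl fun i _ => Finset.sum_congr rfl fun j _ => by ring
  rw [hsplit, sum_sum_div_add_div_mul, sum_sum_div_add_div_mul]
  simp only [QuadraticMap.mulHessian, toQuadraticForm'_apply, polar_toQuadraticForm',
    dotProduct_diagonal_mulVec, mul_comm (y _) (x _)]
  ring

end Kantorovich

theorem kantorovich_diagonal_convex_iff_H_posSemidef {n : ℕ}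
    (lam : Fin n → ℝ) (hlam : ∀ i, 0 < lam i) :
    ConvexOn ℝ Set.univ
      (fun x : Fin n → ℝ =>
        (x ⬝ᵥ (Matrix.diagonal lam *ᵥ x)) * (x ⬝ᵥ ((Matrix.diagonal lam)⁻¹ *ᵥ x))) ↔
    ∀ y : Fin n → ℝ,
      (Matrix.of fun i j =>
        if i = j then
          3 * y i ^ 2 + (1 : ℝ) / 2 *
            ∑ k ∈ Finset.univ.erase i, (lam i / lam k + lam k / lam i) * y k ^ 2
        else (lam i / lam j + lam j / lam i) * y i * y j).PosSemidef := by
  have hne : ∀ i, lam i ≠ 0 := fun i => (hlam i).ne'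
  have hinv : (diagonal lam)⁻¹ = diagonal lam⁻¹ := inv_eq_left_inv <| by
    rw [diagonal_mul_diagonal, ← diagonal_one]
    exact congrArg diagonal (funext fun i => inv_mul_cancel₀ (hne i))
  change _ ↔ ∀ y, (kantorovichMatrix lam y).PosSemidef
  simp_rw [hinv, ← toQuadraticForm'_apply, QuadraticMap.convexOn_univ_mul_iff,
    posSemidef_iff_dotProduct_mulVec, star_trivial, dotProduct_kantorovichMatrix_mulVec hne,
    isHermitian_iff_isSymm, isSymm_kantorovichMatrix, true_and,
    mul_nonneg_iff_of_pos_left (one_half_pos : (0 : ℝ) < 1 / 2)]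
  exact forall_comm
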